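/- arXiv:1904.07517 — 2 statements merged into one kernel-verified Lean document; each statement's English description precedes it below -/
import Mathlib

section
/- Let n, k, α be positive integers with k ≥ 3 and 4α − 3n ≥ 1, and set r₄(n,k,α) = 4^{k−1}·n − ((4^k − 1)/3)·α. If 4·r₄(n,k,α) < k, then there is no quaternary Hermitian LCD [n,k,α] code C whose Hermitian dual C^{⊥H} contains no vector of weight 1 (i.e., no such code with d(C^{⊥H}) ≥ 2). -/
open scoped Classical

noncomputable section

/-- The finite field with four elements. -/
abbrev F4 := GaloisField 2 2

/-- The (Hamming) weight of a vector over `F4`: the number of nonzero coordinates. -/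
def wt {n : ℕ} (x : Fin n → F4) : ℕ :=
  (Finset.univ.filter (fun i => x i ≠ 0)).card

/-- Hermitian inner product on `F4^n`: `∑ i, x i * (conj (y i))` with `conj z = z^2`. -/
def hermInner {n : ℕ} (x y : Fin n → F4) : F4 :=
  ∑ i, x i * (y i) ^ 2

/-- Membership in the Hermitian dual `C^{⊥H}` of a code `C`. -/
def inHermDual {n : ℕ} (C : Submodule F4 (Fin n → F4)) (x : Fin n → F4) : Prop :=
  ∀ y ∈ C, hermInner x y = 0

/-- `C` is Hermitian LCD: `C ∩ C^{⊥H} = {0}`. -/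
def IsHermLCD {n : ℕ} (C : Submodule F4 (Fin n → F4)) : Prop :=
  ∀ x ∈ C, inHermDual C x → x = 0

/-- `C` has minimum weight (exactly) `d`. -/
def minWtIs {n : ℕ} (C : Submodule F4 (Fin n → F4)) (d : ℕ) : Prop :=
  (∃ x ∈ C, x ≠ 0 ∧ wt x = d) ∧ ∀ x ∈ C, x ≠ 0 → d ≤ wt x

/-- `C` is a quaternary Hermitian LCD `[n,k,d]` code. -/
def IsHermLCDCode (n k d : ℕ) (C : Submodule F4 (Fin n → F4)) : Prop :=
  Module.finrank F4 C = k ∧ IsHermLCD C ∧ minWtIs C d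

/-- `d₄(n,k) = d`: the largest minimum weight among quaternary Hermitian LCD `[n,k]` codes
is `d`. -/
def d4Is (n k d : ℕ) : Prop :=
  (∃ C : Submodule F4 (Fin n → F4), IsHermLCDCode n k d C) ∧
  (∀ C : Submodule F4 (Fin n → F4), Module.finrank F4 C = k → IsHermLCD C →
    ∃ x ∈ C, x ≠ 0 ∧ wt x ≤ d)

end

/-!
Since the Hermitian dual has no word of weight 1, no coordinate vanishes identically on `C`, so
the weights of the `4 ^ k` codewords add up to `3 · 4 ^ (k - 1) · n`. Every nonzero weight is at
least `α`, so the hypothesis `4 r₄ < k` leaves fewer than `3k / 4` nonzero codewords whose weight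
has the parity opposite to `α`.

On the other hand `wt (x + c) ≡ wt x + wt c + Tr ⟨x, c⟩ (mod 2)`, and for `x ≠ 0` in the LCD code
`C` the map `c ↦ Tr ⟨x, c⟩` is a nonzero additive map to `𝔽₂`. Fix a nonzero `x` of weight
parity `α`: a nonzero `c` of parity `α` with `x + c` of parity `α` has `Tr ⟨x, c⟩ = α`, which
happens for at most half of `C`. Hence the nonzero codewords of parity `α` number at most
`4 ^ k / 2` plus the number of the others plus one, and counting both classes gives
`4 ^ k ≤ 3k + 3`, impossible for `k ≥ 3`.
-/

open Finset

section LinearCode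

variable {K ι : Type*} [Field K] [Fintype K] [DecidableEq K] [Fintype ι] [DecidableEq ι]

theorem Submodule.card_filter_apply_eq_zero_mul_card {C : Submodule K (ι → K)} {i : ι}
    (hi : ∃ c ∈ C, c i ≠ 0) :
    #{c : C | (c : ι → K) i = 0} * Fintype.card K = Fintype.card C := by
  obtain ⟨c, hc, hci⟩ := hi
  let f : C →+ K := (LinearMap.proj i ∘ₗ C.subtype).toAddMonoidHom
  have hf : Function.Surjective f := fun b =>
    ⟨⟨(b / c i) • c, C.smul_mem _ hc⟩, by simp [f, hci]⟩
  have hfiber (b : K) : #{x : C | f x = b} = #{x : C | f x = 0} :=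
    AddMonoidHom.card_fiber_eq_of_mem_range f (hf b) (hf 0)
  calc #{c : C | (c : ι → K) i = 0} * Fintype.card K
      = ∑ b : K, #{x : C | f x = b} := by
        rw [sum_congr rfl fun b _ => hfiber b, sum_const, card_univ, smul_eq_mul, mul_comm]
        rfl
    _ = Fintype.card C := (card_eq_sum_card_fiberwise (by simp)).symm

theorem Submodule.sum_hammingNorm_mul_card {C : Submodule K (ι → K)}
    (hC : ∀ i, ∃ c ∈ C, c i ≠ 0) :
    (∑ c : C, hammingNorm (c : ι → K)) * Fintype.card K =
      Fintype.card ι * ((Fintype.card K - 1) * Fintype.card C) := by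
  have hcoord (i : ι) :
      #{c : C | (c : ι → K) i ≠ 0} * Fintype.card K = (Fintype.card K - 1) * Fintype.card C := by
    have hsplit := card_filter_add_card_filter_not (s := (univ : Finset C))
      (fun c => (c : ι → K) i = 0)
    have hzero := C.card_filter_apply_eq_zero_mul_card (hC i)
    rw [card_univ] at hsplit
    have hK : 1 ≤ Fintype.card K := Fintype.card_pos
    rw [← hsplit] at hzero ⊢
    zify [hK] at hzero ⊢
    linear_combination -hzero
  calc (∑ c : C, hammingNorm (c : ι → K)) * Fintype.card K
      = ∑ i : ι, #{c : C | (c : ι → K) i ≠ 0} * Fintype.card K := by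
        simp only [hammingNorm, card_filter, ← sum_mul]
        rw [sum_comm]
    _ = Fintype.card ι * ((Fintype.card K - 1) * Fintype.card C) := by
        simp [hcoord]

end LinearCode

theorem AddMonoidHom.two_mul_card_fiber_le {A B : Type*} [AddGroup A] [Fintype A] [AddMonoid B]
    (f : A →+ B) (hf : f ≠ 0) (b : B) : 2 * #{a | f a = b} ≤ Fintype.card A := by
  by_cases hb : b ∈ Set.range f
  · obtain ⟨y, hy⟩ : ∃ y, f y ≠ 0 := by
      by_contra! h
      exact hf (AddMonoidHom.ext h)
    have h0 := AddMonoidHom.card_fiber_eq_of_mem_range f hb ⟨0, f.map_zero⟩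
    have hy' := AddMonoidHom.card_fiber_eq_of_mem_range f ⟨y, rfl⟩ ⟨0, f.map_zero⟩
    have hdisj : Disjoint (univ.filter (f · = 0)) (univ.filter (f · = f y)) :=
      disjoint_filter.2 fun a _ ha0 hay => hy (hay ▸ ha0)
    calc 2 * #{a | f a = b} = #(univ.filter (f · = 0) ∪ univ.filter (f · = f y)) := by
          rw [card_union_of_disjoint hdisj, h0, hy']; ring
      _ ≤ Fintype.card A := card_le_univ _
  · simp [filter_eq_empty_iff.2 fun a _ h => hb ⟨a, h⟩]

namespace F4

noncomputable instance : Fintype F4 := Fintype.ofFinite F4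

theorem card_eq : Fintype.card F4 = 4 := by
  simpa [Nat.card_eq_fintype_card] using GaloisField.card 2 2 two_ne_zero

theorem pow_four (a : F4) : a ^ 4 = a := by
  simpa [card_eq] using FiniteField.pow_card a

theorem pow_three_of_ne_zero {a : F4} (ha : a ≠ 0) : a ^ 3 = 1 := by
  simpa [card_eq] using FiniteField.pow_card_sub_one_eq_one a ha

theorem exists_add_sq_ne_zero : ∃ a : F4, a + a ^ 2 ≠ 0 := by
  by_contra! h
  have hsub : (univ : Finset F4) ⊆ {0, 1} := fun a _ => by
    have : a * (a - 1) = 0 := by linear_combination h a - a * CharTwo.two_eq_zero (R := F4)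
    rcases mul_eq_zero.1 this with h0 | h1
    · simp [h0]
    · simp [sub_eq_zero.1 h1]
  have := card_le_card hsub
  rw [card_univ, card_eq] at this
  exact absurd (this.trans card_le_two) (by norm_num)

end F4

section Hermitian

variable {n : ℕ}

theorem wt_eq_hammingNorm (x : Fin n → F4) : wt x = hammingNorm x := rfl

theorem hermInner_self (x : Fin n → F4) : hermInner x x = (wt x : F4) := by
  rw [hermInner, wt, card_filter, Nat.cast_sum]
  refine sum_congr rfl fun i _ => ?_
  by_cases h : x i = 0
  · simp [h]
  · simp [h, ← pow_succ', F4.pow_three_of_ne_zero h]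

theorem hermInner_swap (x y : Fin n → F4) : hermInner y x = hermInner x y ^ 2 := by
  rw [hermInner, hermInner, ← frobenius_def (p := 2), map_sum]
  refine sum_congr rfl fun i _ => ?_
  rw [frobenius_def, mul_pow, ← pow_mul, F4.pow_four, mul_comm]

theorem hermInner_add_right (x y z : Fin n → F4) :
    hermInner x (y + z) = hermInner x y + hermInner x z := by
  simp only [hermInner, Pi.add_apply, CharTwo.add_sq, mul_add, sum_add_distrib]

theorem hermInner_smul_right (x y : Fin n → F4) (a : F4) :
    hermInner x (a • y) = a ^ 2 * hermInner x y := by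
  simp only [hermInner, Pi.smul_apply, smul_eq_mul, mul_sum]
  exact sum_congr rfl fun i _ => by ring

theorem hermInner_add_left (x y z : Fin n → F4) :
    hermInner (x + y) z = hermInner x z + hermInner y z := by
  simp only [hermInner, Pi.add_apply, add_mul, sum_add_distrib]

/-- `z + z ^ 2` is the trace of `z` from `F4` to `𝔽₂`. -/
noncomputable def hermTraceForm (x : Fin n → F4) : (Fin n → F4) →+ F4 where
  toFun y := hermInner x y + hermInner x y ^ 2
  map_zero' := by simp [hermInner]
  map_add' y z := by rw [hermInner_add_right, CharTwo.add_sq]; ring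

theorem hermTraceForm_apply (x y : Fin n → F4) :
    hermTraceForm x y = hermInner x y + hermInner x y ^ 2 := rfl

theorem cast_wt_add (x y : Fin n → F4) :
    (wt (x + y) : F4) = wt x + wt y + hermTraceForm x y := by
  simp only [← hermInner_self, hermTraceForm_apply, hermInner_add_left, hermInner_add_right,
    hermInner_swap x y]
  ring

theorem exists_apply_ne_zero_of_wt_ne_one {C : Submodule F4 (Fin n → F4)}
    (hC : ∀ x, inHermDual C x → wt x ≠ 1) (i : Fin n) : ∃ c ∈ C, c i ≠ 0 := by
  by_contra! h
  refine hC (Pi.single i 1) (fun y hy => ?_) ?_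
  · simp [hermInner, Pi.single_apply, h y hy]
  · simp [wt, Pi.single_apply, filter_eq']

theorem exists_hermTraceForm_ne_zero {C : Submodule F4 (Fin n → F4)} (hC : IsHermLCD C)
    {x : Fin n → F4} (hx : x ∈ C) (hx0 : x ≠ 0) : ∃ y ∈ C, hermTraceForm x y ≠ 0 := by
  obtain ⟨y, hy, hxy⟩ : ∃ y ∈ C, hermInner x y ≠ 0 := by
    by_contra! h
    exact hx0 (hC x hx h)
  obtain ⟨a, ha⟩ := F4.exists_add_sq_ne_zero
  -- `(t ^ 2) ^ 2 = t` in `F4`, so this scaling of `y` moves `hermInner x y` to `a`.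
  refine ⟨((a / hermInner x y) ^ 2) • y, C.smul_mem _ hy, ?_⟩
  rwa [hermTraceForm_apply, hermInner_smul_right, ← pow_mul, F4.pow_four, div_mul_cancel₀ _ hxy]

section Parity

variable {C : Submodule F4 (Fin n → F4)} {α : ℕ}

/-- Since `F4` has characteristic 2, `(m : F4) = (α : F4)` says that `m ≡ α [MOD 2]`. -/
noncomputable def sameParityCodewords (C : Submodule F4 (Fin n → F4)) (α : ℕ) : Finset C :=
  {c | c ≠ 0 ∧ (wt (c : Fin n → F4) : F4) = α}

noncomputable def otherParityCodewords (C : Submodule F4 (Fin n → F4)) (α : ℕ) : Finset C :=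
  {c | c ≠ 0 ∧ (wt (c : Fin n → F4) : F4) ≠ α}

@[simp]
theorem mem_sameParityCodewords {c : C} :
    c ∈ sameParityCodewords C α ↔ c ≠ 0 ∧ (wt (c : Fin n → F4) : F4) = α := by
  simp [sameParityCodewords]

@[simp]
theorem mem_otherParityCodewords {c : C} :
    c ∈ otherParityCodewords C α ↔ c ≠ 0 ∧ (wt (c : Fin n → F4) : F4) ≠ α := by
  simp [otherParityCodewords]

theorem card_sameParityCodewords_add_card_otherParityCodewords (C : Submodule F4 (Fin n → F4))
    (α : ℕ) : #(sameParityCodewords C α) + #(otherParityCodewords C α) + 1 = Fintype.card C := by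
  have h := card_filter_add_card_filter_not (s := univ.erase (0 : C))
    (fun c : C => (wt (c : Fin n → F4) : F4) = α)
  rw [card_erase_of_mem (mem_univ _), card_univ] at h
  have hsame : sameParityCodewords C α = (univ.erase 0).filter
      (fun c : C => (wt (c : Fin n → F4) : F4) = α) := by
    ext; simp
  have hother : otherParityCodewords C α = (univ.erase 0).filter
      (fun c : C => (wt (c : Fin n → F4) : F4) ≠ α) := by
    ext; simp
  rw [hsame, hother, h, Nat.sub_add_cancel Fintype.card_pos]

theorem four_mul_card_otherParityCodewords_le (hmin : ∀ x ∈ C, x ≠ 0 → α ≤ wt x)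
    (hcol : ∀ i, ∃ c ∈ C, c i ≠ 0) :
    4 * ((Fintype.card C - 1) * α + #(otherParityCodewords C α)) ≤ 3 * (n * Fintype.card C) := by
  have hsum := C.sum_hammingNorm_mul_card hcol
  norm_num [F4.card_eq] at hsum
  have hle (c : C) :
      (if c ≠ 0 then α else 0) + (if c ∈ otherParityCodewords C α then 1 else 0) ≤
        wt (c : Fin n → F4) := by
    by_cases hc : c = 0
    · simp [hc]
    have hα := hmin c c.2 (by simpa using hc)
    by_cases hcα : c ∈ otherParityCodewords C α
    · have hne : wt (c : Fin n → F4) ≠ α :=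
        fun h => (mem_otherParityCodewords.1 hcα).2 (congrArg _ h)
      rw [if_pos hc, if_pos hcα]
      omega
    · simpa [hc, hcα] using hα
  have hnonzero : #{c : C | c ≠ 0} = Fintype.card C - 1 := by
    rw [filter_ne', card_erase_of_mem (mem_univ _), card_univ]
  calc 4 * ((Fintype.card C - 1) * α + #(otherParityCodewords C α))
      = 4 * ∑ c : C, ((if c ≠ 0 then α else 0) +
          (if c ∈ otherParityCodewords C α then 1 else 0)) := by
        rw [sum_add_distrib, sum_ite, sum_const_zero, sum_const, sum_boole, filter_univ_mem,
          ← hnonzero]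
        simp only [smul_eq_mul, add_zero, Nat.cast_id, mul_comm]
    _ ≤ 4 * ∑ c : C, wt (c : Fin n → F4) := by gcongr with c; exact hle c
    _ = 3 * (n * Fintype.card C) := by
      simp only [wt_eq_hammingNorm]
      linarith

theorem two_mul_card_sameParityCodewords_le (hC : IsHermLCD C) :
    2 * #(sameParityCodewords C α) ≤ Fintype.card C + 2 * (#(otherParityCodewords C α) + 1) := by
  rcases (sameParityCodewords C α).eq_empty_or_nonempty with hempty | ⟨x, hx⟩
  · simp [hempty]
  obtain ⟨hx0, hxα⟩ := mem_sameParityCodewords.1 hx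
  let φ : C →+ F4 := (hermTraceForm (x : Fin n → F4)).comp C.subtype.toAddMonoidHom
  have hφ : φ ≠ 0 := by
    obtain ⟨y, hy, hxy⟩ := exists_hermTraceForm_ne_zero hC x.2 (Subtype.coe_ne_coe.2 hx0)
    intro h
    exact hxy (by simpa [φ] using DFunLike.congr_fun h ⟨y, hy⟩)
  have hpaired : {c ∈ sameParityCodewords C α | x + c ∈ sameParityCodewords C α} ⊆
      univ.filter (fun c => φ c = α) := by
    intro c hc
    obtain ⟨hcS, hxcS⟩ := mem_filter.1 hc
    have hcα := (mem_sameParityCodewords.1 hcS).2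
    have hxcα := (mem_sameParityCodewords.1 hxcS).2
    rw [Submodule.coe_add, cast_wt_add] at hxcα
    refine mem_filter.2 ⟨mem_univ _, ?_⟩
    change hermTraceForm (x : Fin n → F4) c = α
    linear_combination hxcα - hxα - hcα - (α : F4) * CharTwo.two_eq_zero (R := F4)
  have hunpaired : #{c ∈ sameParityCodewords C α | x + c ∉ sameParityCodewords C α} ≤
      #(otherParityCodewords C α) + 1 := by
    refine (card_le_card_of_injOn (x + ·) (fun c hc => ?_)
      (fun a _ b _ h => add_left_cancel h)).trans (card_insert_le 0 _)
    have hxcS := (mem_filter.1 hc).2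
    rw [mem_coe, mem_insert, mem_otherParityCodewords]
    by_cases h0 : x + c = 0
    · exact Or.inl h0
    · exact Or.inr ⟨h0, fun h => hxcS (mem_sameParityCodewords.2 ⟨h0, h⟩)⟩
  have hsplit := card_filter_add_card_filter_not (s := sameParityCodewords C α)
    (fun c => x + c ∈ sameParityCodewords C α)
  have := card_le_card hpaired
  have := φ.two_mul_card_fiber_le hφ α
  omega

end Parity

end Hermitian

theorem three_mul_four_pow_sub_one_div_three (k : ℕ) :
    3 * (((4 ^ k - 1) / 3 : ℕ) : ℤ) = 4 ^ k - 1 := by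
  have h3 : 3 ∣ 4 ^ k - 1 := by simpa using Nat.sub_dvd_pow_sub_pow 4 1 k
  rw [← Nat.cast_ofNat, ← Nat.cast_mul, Nat.mul_div_cancel' h3,
    Nat.cast_sub (Nat.one_le_pow _ _ (by norm_num))]
  norm_num

theorem three_mul_add_three_lt_four_pow {k : ℕ} (hk : 3 ≤ k) : 3 * k + 3 < 4 ^ k := by
  induction k, hk using Nat.le_induction with
  | base => norm_num
  | succ k _ ih => rw [pow_succ]; omega

theorem stmt7_general (n k α : ℕ) (hk : 3 ≤ k)
    (h2 : 4 * (4 ^ (k - 1) * (n : ℤ) - (((4 ^ k - 1) / 3 : ℕ) : ℤ) * (α : ℤ)) < (k : ℤ)) :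
    ¬ ∃ C : Submodule F4 (Fin n → F4),
      IsHermLCDCode n k α C ∧ ∀ x, inHermDual C x → wt x ≠ 1 := by
  rintro ⟨C, ⟨hdim, hLCD, -, hmin⟩, hdual⟩
  have hcard : Fintype.card C = 4 ^ k := by
    rw [Module.card_eq_pow_finrank (K := F4), F4.card_eq, hdim]
  have hother :=
    four_mul_card_otherParityCodewords_le hmin (exists_apply_ne_zero_of_wt_ne_one hdual)
  have hsame := two_mul_card_sameParityCodewords_le (α := α) hLCD
  have hpart := card_sameParityCodewords_add_card_otherParityCodewords C α
  rw [hcard] at hother hsame hpart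
  have hpow : (4 : ℤ) ^ k = 4 * 4 ^ (k - 1) := by rw [← pow_succ', Nat.sub_add_cancel (by omega)]
  have hq : 4 ^ k ≤ 4 * #(otherParityCodewords C α) + 4 := by omega
  have hb : 4 * (#(otherParityCodewords C α) : ℤ) < 3 * k := by
    have hotherℤ := (Nat.cast_le (α := ℤ)).2 hother
    push_cast [Nat.cast_sub (Nat.one_le_pow k 4 (by norm_num))] at hotherℤ
    linear_combination hotherℤ + 3 * h2 + (n : ℤ) * 3 * hpow +
      (α : ℤ) * 4 * three_mul_four_pow_sub_one_div_three k
  have := three_mul_add_three_lt_four_pow hk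
  omega

/-- if `4·r₄(n,k,α) < k`, `k ≥ 3` and `4α - 3n ≥ 1`, there is no quaternary
Hermitian LCD `[n,k,α]` code whose Hermitian dual has no vector of weight 1. -/
theorem stmt7 (n k α : ℕ) (hn : 1 ≤ n) (hk : 3 ≤ k) (hα : 1 ≤ α)
    (h1 : 1 ≤ 4 * (α : ℤ) - 3 * (n : ℤ))
    (h2 : 4 * (4 ^ (k - 1) * (n : ℤ) - (((4 ^ k - 1) / 3 : ℕ) : ℤ) * (α : ℤ)) < (k : ℤ)) :
    ¬ ∃ C : Submodule F4 (Fin n → F4),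
      IsHermLCDCode n k α C ∧ ∀ x, inHermDual C x → wt x ≠ 1 :=
  stmt7_general n k α hk h2
end

section
/- Let n, k, α be positive integers with k ≥ 3 and 4α − 3n ≥ 1, set r = r₄(n,k,α) = 4^{k−1}·n − ((4^k − 1)/3)·α, and suppose 4r ≥ k. If there is no quaternary Hermitian LCD [4r, k, 3r] code C₀ whose Hermitian dual C₀^{⊥H} contains no vector of weight 1, then there is no quaternary Hermitian LCD [n, k, α] code C whose Hermitian dual C^{⊥H} contains no vector of weight 1. -/
open scoped Classical

/-!
A generator matrix of `C` without zero columns is a multiset of `n` points of the projective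
space `ℙ(C*)`, the point of column `j` being the coordinate functional `y ↦ y j`. Averaging the
weights of `C` over a hyperplane `ker P` and over its complement shows that every point `P`
occurs at least `s = 4α - 3n` times. Deleting `s` columns from each point removes `s` copies of
the simplex code: a nonzero codeword loses exactly `s·4^(k-1)` of its weight, and the Hermitian
form is unchanged, because `∑_P P(y) P(y')²` vanishes over `𝔽₄` once `k ≥ 3`. The punctured
code is therefore a Hermitian LCD `[4r, k, 3r]` code, still without zero columns.
-/

open Finset

open scoped LinearAlgebra.Projectivization

section Counting

variable {K V : Type*} [Field K] [Fintype K] [AddCommGroup V] [Module K V] [Fintype V]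

theorem card_filter_apply_eq_zero_mul_card (f : V →ₗ[K] K) (hf : f ≠ 0) :
    #{x | f x = 0} * Fintype.card K = Fintype.card V := by
  have hsurj : Function.Surjective f :=
    LinearMap.range_eq_top.mp (Module.Dual.range_eq_top_of_ne_zero hf)
  have := Submodule.card_eq_card_quotient_mul_card (LinearMap.ker f)
  rw [Nat.card_congr (f.quotKerEquivOfSurjective hsurj).toEquiv] at this
  simpa [Nat.card_eq_fintype_card, Fintype.card_subtype] using this.symm

theorem card_filter_apply_ne_zero_mul_card (f : V →ₗ[K] K) (hf : f ≠ 0) :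
    #{x | f x ≠ 0} * Fintype.card K = (Fintype.card K - 1) * Fintype.card V := by
  have h := card_filter_apply_eq_zero_mul_card f hf
  have hsplit := Finset.card_filter_add_card_filter_not (s := univ) (fun x => f x = 0)
  rw [Finset.card_univ] at hsplit
  have hq : 1 ≤ Fintype.card K := Fintype.card_pos
  rw [← hsplit] at h ⊢
  zify [hq] at h ⊢
  linear_combination -h

theorem card_filter_apply_eq_zero_and_ne_zero_mul_card (f g : V →ₗ[K] K)
    (hfg : ¬ LinearMap.ker f ≤ LinearMap.ker g) :
    #{x | f x = 0 ∧ g x ≠ 0} * Fintype.card K = (Fintype.card K - 1) * #{x | f x = 0} := by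
  have hg : g ∘ₗ (LinearMap.ker f).subtype ≠ 0 := by
    contrapose! hfg
    exact fun x hx => LinearMap.congr_fun hfg ⟨x, hx⟩
  have h := card_filter_apply_ne_zero_mul_card _ hg
  rw [← Fintype.card_subtype] at h
  rw [← Fintype.card_subtype, ← Fintype.card_subtype, ← Fintype.card_congr
    (Equiv.subtypeSubtypeEquivSubtypeInter (fun x => f x = 0) (fun x => g x ≠ 0))]
  exact h

end Counting

namespace Projectivization

variable {K V : Type*} [Field K] [AddCommGroup V] [Module K V]

noncomputable instance [Finite V] : Fintype (ℙ K V) := Fintype.ofFinite _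

theorem apply_rep_mk {M : Type*} {f : V → M} (hf : ∀ (a : Kˣ) v, f (a • v) = f v) (v : V)
    (hv : v ≠ 0) : f (mk K v hv).rep = f v := by
  obtain ⟨a, ha⟩ := exists_smul_eq_mk_rep K v hv
  rw [← ha, hf]

theorem sum_filter_ne_zero_eq_card_units_smul [Fintype K] [Fintype V] [DecidableEq V]
    {M : Type*} [AddCommMonoid M] (f : V → M) (hf : ∀ (a : Kˣ) v, f (a • v) = f v) :
    ∑ v with v ≠ 0, f v = Fintype.card Kˣ • ∑ P : ℙ K V, f P.rep := by
  rw [Finset.sum_subtype (p := fun v => v ≠ 0) _ (fun v => by simp) f,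
    ← (nonZeroEquivProjectivizationProdUnits K V).symm.sum_comp, Fintype.sum_prod_type,
    Finset.smul_sum]
  refine Finset.sum_congr rfl fun P _ => ?_
  rw [← Finset.card_univ, ← Finset.sum_const]
  refine Finset.sum_congr rfl fun a _ => ?_
  set w := (nonZeroEquivProjectivizationProdUnits K V).symm (P, a)
  have hw : mk K w.1 w.2 = P :=
    congrArg Prod.fst ((nonZeroEquivProjectivizationProdUnits K V).apply_symm_apply (P, a))
  rw [← hw, apply_rep_mk hf]

end Projectivization

section Fibers

variable {ι β : Type*} (π : ι → β)

theorem exists_finset_card_fiber_eq [Fintype ι] {s : ℕ} (h : ∀ b, s ≤ #{i | π i = b}) :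
    ∃ D : Finset ι, ∀ b, #{i ∈ D | π i = b} = s := by
  choose T hTsub hTcard using fun b => Finset.exists_subset_card_eq (h b)
  refine ⟨univ.filter fun i => i ∈ T (π i), fun b => ?_⟩
  rw [Finset.filter_filter, ← hTcard b]
  congr 1
  ext i
  simp only [Finset.mem_filter, Finset.mem_univ, true_and]
  constructor
  · rintro ⟨hi, rfl⟩
    exact hi
  · intro hi
    obtain rfl := (Finset.mem_filter.1 (hTsub b hi)).2
    exact ⟨hi, rfl⟩

theorem sum_comp_eq_smul_sum_of_card_fiber_eq [Fintype β] {M : Type*} [AddCommMonoid M]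
    {D : Finset ι} {s : ℕ} (hD : ∀ b, #{i ∈ D | π i = b} = s) (g : β → M) :
    ∑ i ∈ D, g (π i) = s • ∑ b, g b := by
  rw [Finset.smul_sum, ← Finset.sum_fiberwise D π]
  refine Finset.sum_congr rfl fun b _ => ?_
  rw [← hD b, ← Finset.sum_const]
  exact Finset.sum_congr rfl fun i hi => by rw [(Finset.mem_filter.1 hi).2]

theorem card_eq_mul_card_of_card_fiber_eq [Fintype β] {D : Finset ι} {s : ℕ}
    (hD : ∀ b, #{i ∈ D | π i = b} = s) : #D = s * Fintype.card β := by
  have h := sum_comp_eq_smul_sum_of_card_fiber_eq π hD (fun _ => (1 : ℕ))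
  simpa only [Finset.sum_const, Finset.card_univ, smul_eq_mul, mul_one] using h

end Fibers

section CharTwo

variable {K : Type*} [Field K] [CharP K 2]

theorem sum_eq_zero_of_add_invariant {W : Type*} [AddCommGroup W] [Module K W] [Fintype W]
    (F : W → K) {u : W} (hu : u ≠ 0) (hF : ∀ w, F (w + u) = F w) : ∑ w, F w = 0 := by
  have huu : u + u = 0 := by
    rw [← two_smul K u, CharTwo.two_eq_zero, zero_smul]
  refine Finset.sum_involution (fun w _ => w + u) (fun w _ => ?_) (fun w _ _ => ?_)
    (fun w _ => Finset.mem_univ _) (fun w _ => ?_)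
  · rw [hF, CharTwo.add_self_eq_zero]
  · simpa using hu
  · rw [add_assoc, huu, add_zero]

theorem sum_dual_apply_eq_zero {V : Type*} [AddCommGroup V] [Module K V] [FiniteDimensional K V]
    [Fintype (Module.Dual K V)] (hV : 2 < Module.finrank K V) (F : K → K → K) (y y' : V) :
    ∑ φ : Module.Dual K V, F (φ y) (φ y') = 0 := by
  have hspan : Submodule.span K {y, y'} < ⊤ := by
    refine Submodule.lt_top_of_finrank_lt_finrank (lt_of_le_of_lt ?_ hV)
    have h := finrank_span_finset_le_card (R := K) ({y, y'} : Finset V)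
    rw [Finset.coe_insert, Finset.coe_singleton] at h
    exact h.trans Finset.card_le_two
  obtain ⟨φ₀, hφ₀, hmap⟩ := Submodule.exists_dual_map_eq_bot_of_lt_top hspan inferInstance
  have hvanish : ∀ v ∈ ({y, y'} : Set V), φ₀ v = 0 := fun v hv =>
    (Submodule.mem_bot K).1 (hmap ▸ Submodule.mem_map_of_mem (Submodule.subset_span hv))
  have hy := hvanish y (by simp)
  have hy' := hvanish y' (by simp)
  -- translating by `φ₀`, which kills `y` and `y'`, leaves every summand unchanged
  exact sum_eq_zero_of_add_invariant _ hφ₀ fun φ => by simp [hy, hy']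

end CharTwo

section FiniteDual

variable {K V : Type*} [Field K] [Finite K] [AddCommGroup V] [Module K V] [Finite V]

instance : Finite (Module.Dual K V) := Finite.of_injective _ DFunLike.coe_injective

noncomputable instance : Fintype (Module.Dual K V) := Fintype.ofFinite _

end FiniteDual

theorem exists_smul_eq_of_ker_le_ker {K V : Type*} [Field K] [AddCommGroup V] [Module K V]
    {f g : Module.Dual K V} (h : LinearMap.ker f ≤ LinearMap.ker g) : ∃ a : K, a • f = g := by
  have hmem := mem_span_of_iInf_ker_le_ker (L := fun _ : Unit => f) (by simpa using h)
  rwa [Set.range_const, Submodule.mem_span_singleton] at hmem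

theorem card_filter_rep_apply_ne_zero_mul_card {K V : Type*} [Field K] [Fintype K]
    [AddCommGroup V] [Module K V] [Fintype V] [Fintype (Module.Dual K V)] {y : V} (hy : y ≠ 0) :
    #{P : ℙ K (Module.Dual K V) | P.rep y ≠ 0} * Fintype.card K
      = Fintype.card (Module.Dual K V) := by
  have hinv : ∀ (a : Kˣ) (φ : Module.Dual K V),
      (if (a • φ) y ≠ 0 then 1 else 0) = if φ y ≠ 0 then 1 else 0 := by
    intro a φ
    simp [Units.smul_def]
  have hsum := Projectivization.sum_filter_ne_zero_eq_card_units_smul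
    (fun φ : Module.Dual K V => if φ y ≠ 0 then 1 else 0) hinv
  rw [Finset.sum_filter_of_ne (fun φ _ h => by rintro rfl; simp at h), Finset.sum_boole,
    Finset.sum_boole, smul_eq_mul, Fintype.card_units, Nat.cast_id, Nat.cast_id] at hsum
  have heval : Module.Dual.eval K V y ≠ 0 := by
    simpa [LinearMap.ext_iff] using (Module.forall_dual_apply_eq_zero_iff K y).not.2 hy
  have hcount : #{φ : Module.Dual K V | φ y ≠ 0} * Fintype.card K
      = (Fintype.card K - 1) * Fintype.card (Module.Dual K V) :=
    card_filter_apply_ne_zero_mul_card _ heval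
  have hK : 0 < Fintype.card K - 1 := by
    have := Fintype.one_lt_card (α := K)
    omega
  rw [hsum, mul_assoc] at hcount
  exact Nat.eq_of_mul_eq_mul_left hK hcount

noncomputable instance : Fintype F4 := Fintype.ofFinite F4

theorem card_F4 : Fintype.card F4 = 4 := by
  simpa using GaloisField.card 2 2 (by norm_num)

theorem card_units_F4 : Fintype.card F4ˣ = 3 := by
  rw [Fintype.card_units, card_F4]

theorem units_F4_pow_three (a : F4ˣ) : (a : F4) ^ 3 = 1 := by
  rw [← card_units_F4, ← Units.val_pow_eq_pow_val, pow_card_eq_one, Units.val_one]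

theorem three_nsmul_F4 (z : F4) : 3 • z = z := by
  rw [show 3 = 2 + 1 from rfl, add_nsmul, two_nsmul, CharTwo.add_self_eq_zero, zero_add,
    one_nsmul]

theorem units_smul_apply_mul_sq {V : Type*} [AddCommGroup V] [Module F4 V] (a : F4ˣ)
    (φ : Module.Dual F4 V) (y y' : V) : (a • φ) y * (a • φ) y' ^ 2 = φ y * φ y' ^ 2 := by
  simp only [Units.smul_def, LinearMap.smul_apply, smul_eq_mul]
  linear_combination (φ y * φ y' ^ 2) * units_F4_pow_three a

theorem sum_rep_apply_mul_sq_eq_zero {V : Type*} [AddCommGroup V] [Module F4 V] [Finite V]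
    (hV : 2 < Module.finrank F4 V) (y y' : V) :
    ∑ P : ℙ F4 (Module.Dual F4 V), P.rep y * P.rep y' ^ 2 = 0 := by
  have hsum := Projectivization.sum_filter_ne_zero_eq_card_units_smul
    (fun φ : Module.Dual F4 V => φ y * φ y' ^ 2) (fun a φ => units_smul_apply_mul_sq a φ y y')
  rw [Finset.sum_filter_of_ne (fun φ _ h => by rintro rfl; simp at h), card_units_F4,
    three_nsmul_F4, sum_dual_apply_eq_zero hV (fun a b => a * b ^ 2)] at hsum
  exact hsum.symm

section Codes

variable {n : ℕ}

theorem wt_eq_one_iff {x : Fin n → F4} : wt x = 1 ↔ ∃ j a, a ≠ 0 ∧ x = Pi.single j a := by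
  constructor
  · intro h
    obtain ⟨j, hj⟩ := Finset.card_eq_one.1 h
    have hsupp : ∀ i, x i ≠ 0 ↔ i = j := fun i => by
      simpa using Finset.ext_iff.1 hj i
    refine ⟨j, x j, (hsupp j).2 rfl, funext fun i => ?_⟩
    by_cases hij : i = j
    · subst hij; simp
    · simpa [Pi.single_apply, hij] using mt (hsupp i).1 hij
  · rintro ⟨j, a, ha, rfl⟩
    rw [wt, Finset.card_eq_one]
    exact ⟨j, by ext i; by_cases hij : i = j <;> simp [Pi.single_apply, hij, ha]⟩

theorem hermInner_single_left (j : Fin n) (a : F4) (y : Fin n → F4) :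
    hermInner (Pi.single j a) y = a * y j ^ 2 := by
  rw [hermInner, Finset.sum_eq_single j (fun i _ hij => by simp [hij]) (by simp)]
  simp

theorem forall_inHermDual_wt_ne_one_iff {C : Submodule F4 (Fin n → F4)} :
    (∀ x, inHermDual C x → wt x ≠ 1) ↔ ∀ j, ∃ y ∈ C, y j ≠ 0 := by
  constructor
  · intro h j
    by_contra! hzero
    refine h (Pi.single j 1) (fun y hy => ?_) (wt_eq_one_iff.2 ⟨j, 1, one_ne_zero, rfl⟩)
    rw [hermInner_single_left, hzero y hy]
    ring
  · rintro h x hx hwt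
    obtain ⟨j, a, ha, rfl⟩ := wt_eq_one_iff.1 hwt
    obtain ⟨y, hy, hyj⟩ := h j
    have := hx y hy
    rw [hermInner_single_left] at this
    exact mul_ne_zero ha (pow_ne_zero 2 hyj) this

theorem sum_wt_eq_sum_card_filter {ι : Type*} (S : Finset ι) (v : ι → Fin n → F4) :
    ∑ i ∈ S, wt (v i) = ∑ j, #{i ∈ S | v i j ≠ 0} := by
  simp only [wt, Finset.card_filter]
  exact Finset.sum_comm

end Codes

section ProjectiveSystem

variable {n : ℕ} (C : Submodule F4 (Fin n → F4))

noncomputable def coordFunctional (j : Fin n) : Module.Dual F4 C :=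
  LinearMap.proj j ∘ₗ C.subtype

variable {C}

theorem coordFunctional_ne_zero (hC : ∀ j, ∃ y ∈ C, y j ≠ 0) (j : Fin n) :
    coordFunctional C j ≠ 0 := by
  obtain ⟨y, hy, hyj⟩ := hC j
  exact fun h => hyj (LinearMap.congr_fun h ⟨y, hy⟩)

noncomputable def coordPoint (hC : ∀ j, ∃ y ∈ C, y j ≠ 0) (j : Fin n) :
    ℙ F4 (Module.Dual F4 C) :=
  Projectivization.mk F4 (coordFunctional C j) (coordFunctional_ne_zero hC j)

variable (hC : ∀ j, ∃ y ∈ C, y j ≠ 0)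

theorem apply_rep_coordPoint {M : Type*} {f : Module.Dual F4 C → M}
    (hf : ∀ (a : F4ˣ) φ, f (a • φ) = f φ) (j : Fin n) :
    f (coordPoint hC j).rep = f (coordFunctional C j) :=
  Projectivization.apply_rep_mk hf _ _

theorem rep_apply_eq_zero_of_coordPoint_eq {P : ℙ F4 (Module.Dual F4 C)} {j : Fin n}
    (hj : coordPoint hC j = P) {y : C} (hy : P.rep y = 0) : (y : Fin n → F4) j = 0 := by
  obtain ⟨a, ha⟩ := (Projectivization.mk_eq_mk_iff F4 _ _ (coordFunctional_ne_zero hC j)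
    P.rep_nonzero).1 (hj.trans P.mk_rep.symm)
  change coordFunctional C j y = 0
  rw [← ha, LinearMap.smul_apply, hy, smul_zero]

theorem card_filter_rep_eq_zero_and_apply_ne_zero_mul_four (P : ℙ F4 (Module.Dual F4 C))
    (j : Fin n) :
    #{y : C | P.rep y = 0 ∧ (y : Fin n → F4) j ≠ 0} * 4
      = if coordPoint hC j = P then 0 else 3 * #{y : C | P.rep y = 0} := by
  split_ifs with hj
  · rw [Finset.card_eq_zero.2, zero_mul]
    exact Finset.filter_false_of_mem fun y _ ⟨hy, hyj⟩ =>
      hyj (rep_apply_eq_zero_of_coordPoint_eq hC hj hy)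
  · have hker : ¬ LinearMap.ker P.rep ≤ LinearMap.ker (coordFunctional C j) := by
      intro hle
      obtain ⟨a, ha⟩ := exists_smul_eq_of_ker_le_ker hle
      have ha0 : a ≠ 0 := by
        rintro rfl
        exact coordFunctional_ne_zero hC j (by rw [← ha, zero_smul])
      refine hj ((Projectivization.mk_eq_mk_iff' F4 _ _ _ P.rep_nonzero).2 ⟨a, ha⟩ |>.trans ?_)
      exact P.mk_rep
    have h := card_filter_apply_eq_zero_and_ne_zero_mul_card _ _ hker
    rwa [card_F4] at h

theorem four_mul_le_three_mul_add_card_coordPoint_eq {α : ℕ}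
    (hmin : ∀ y : C, y ≠ 0 → α ≤ wt (y : Fin n → F4)) (P : ℙ F4 (Module.Dual F4 C)) :
    4 * α ≤ 3 * n + #{j | coordPoint hC j = P} := by
  -- Over `C` the weights sum to `3n|C|/4`, over `ker P` to `3(n - m)|C|/16` with `m` the number
  -- of columns at `P`, and off `ker P` each weight is at least `α`.
  set N := Fintype.card C
  have hker : #{y : C | P.rep y = 0} * 4 = N := by
    simpa [card_F4] using card_filter_apply_eq_zero_mul_card P.rep P.rep_nonzero
  have hnker : #{y : C | P.rep y ≠ 0} * 4 = 3 * N := by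
    simpa [card_F4] using card_filter_apply_ne_zero_mul_card P.rep P.rep_nonzero
  have hall : (∑ y : C, wt (y : Fin n → F4)) * 4 = n * (3 * N) := by
    rw [sum_wt_eq_sum_card_filter, Finset.sum_mul]
    have hj : ∀ j, #{y : C | (y : Fin n → F4) j ≠ 0} * 4 = 3 * N := fun j => by
      have h := card_filter_apply_ne_zero_mul_card _ (coordFunctional_ne_zero hC j)
      rw [card_F4] at h
      exact h
    simp [hj]
  have hH : (∑ y : C with P.rep y = 0, wt (y : Fin n → F4)) * 4
      = #{j | coordPoint hC j ≠ P} * (3 * #{y : C | P.rep y = 0}) := by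
    rw [sum_wt_eq_sum_card_filter, Finset.sum_mul]
    simp_rw [Finset.filter_filter, card_filter_rep_eq_zero_and_apply_ne_zero_mul_four hC P]
    rw [Finset.sum_ite, Finset.sum_const_zero, zero_add, Finset.sum_const, smul_eq_mul]
  have hnH : #{y : C | P.rep y ≠ 0} * α ≤ ∑ y : C with P.rep y ≠ 0, wt (y : Fin n → F4) := by
    rw [← smul_eq_mul, ← Finset.sum_const]
    exact Finset.sum_le_sum fun y hy => hmin y fun h => by simp [h] at hy
  have hsplit := Finset.sum_filter_add_sum_filter_not Finset.univ (fun y : C => P.rep y = 0)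
    (fun y => wt (y : Fin n → F4))
  have hcount := Finset.card_filter_add_card_filter_not (s := Finset.univ)
    (fun j : Fin n => coordPoint hC j = P)
  rw [Finset.card_univ, Fintype.card_fin] at hcount
  have hN : 0 < N := Fintype.card_pos
  have hαN := congrArg (α * ·) hnker
  have hm'N := congrArg (#{j | coordPoint hC j ≠ P} * ·) hker
  have hnN := congrArg (· * N) hcount
  refine Nat.le_of_mul_le_mul_left ?_ hN
  nlinarith

theorem card_filter_apply_ne_zero_mul_four_of_card_fiber_eq {D : Finset (Fin n)} {s : ℕ}
    (hD : ∀ P, #{j ∈ D | coordPoint hC j = P} = s) {y : C} (hy : y ≠ 0) :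
    #{j ∈ D | (y : Fin n → F4) j ≠ 0} * 4 = s * Fintype.card C := by
  have hterm : ∀ j, (if (coordPoint hC j).rep y ≠ 0 then 1 else 0)
      = if (y : Fin n → F4) j ≠ 0 then 1 else 0 :=
    apply_rep_coordPoint hC (f := fun φ => if φ y ≠ 0 then 1 else 0)
      (fun a φ => by simp [Units.smul_def])
  have h := sum_comp_eq_smul_sum_of_card_fiber_eq (coordPoint hC) hD
    (fun P => if P.rep y ≠ 0 then 1 else 0)
  rw [Finset.sum_congr rfl fun j _ => hterm j, Finset.sum_boole, Finset.sum_boole, smul_eq_mul,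
    Nat.cast_id, Nat.cast_id] at h
  rw [h, mul_assoc, ← card_F4, card_filter_rep_apply_ne_zero_mul_card hy,
    Module.card_eq_pow_finrank (K := F4) (V := Module.Dual F4 C),
    Module.card_eq_pow_finrank (K := F4) (V := C), Subspace.dual_finrank_eq]

theorem sum_mul_sq_eq_zero_of_card_fiber_eq {D : Finset (Fin n)} {s : ℕ}
    (hD : ∀ P, #{j ∈ D | coordPoint hC j = P} = s) (hC3 : 2 < Module.finrank F4 C)
    (y y' : C) : ∑ j ∈ D, (y : Fin n → F4) j * (y' : Fin n → F4) j ^ 2 = 0 := by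
  have h := sum_comp_eq_smul_sum_of_card_fiber_eq (coordPoint hC) hD
    (fun P => P.rep y * P.rep y' ^ 2)
  rw [sum_rep_apply_mul_sq_eq_zero hC3, smul_zero] at h
  rw [← h]
  exact Finset.sum_congr rfl fun j _ =>
    (apply_rep_coordPoint hC (f := fun φ => φ y * φ y' ^ 2)
      (fun a φ => units_smul_apply_mul_sq a φ y y') j).symm

end ProjectiveSystem

section Puncturing

variable {n m : ℕ} {S : Finset (Fin n)} (hS : #Sᶜ = m)

noncomputable def puncture : (Fin n → F4) →ₗ[F4] (Fin m → F4) :=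
  LinearMap.funLeft F4 F4 (Sᶜ.orderEmbOfFin hS)

theorem sum_comp_orderEmbOfFin_add_sum {M : Type*} [AddCommMonoid M] (g : Fin n → M) :
    ∑ t, g (Sᶜ.orderEmbOfFin hS t) + ∑ j ∈ S, g j = ∑ j, g j := by
  rw [← Finset.sum_compl_add_sum S]
  congr 1
  rw [← Finset.sum_image fun _ _ _ _ h => (Sᶜ.orderEmbOfFin hS).injective h,
    Finset.image_orderEmbOfFin_univ]

theorem hermInner_puncture_add_sum (y y' : Fin n → F4) :
    hermInner (puncture hS y) (puncture hS y') + ∑ j ∈ S, y j * y' j ^ 2 = hermInner y y' :=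
  sum_comp_orderEmbOfFin_add_sum hS fun j => y j * y' j ^ 2

theorem wt_puncture_add_card (y : Fin n → F4) :
    wt (puncture hS y) + #{j ∈ S | y j ≠ 0} = wt y := by
  rw [wt, wt, Finset.card_filter, Finset.card_filter, Finset.card_filter]
  exact sum_comp_orderEmbOfFin_add_sum hS fun j => if y j ≠ 0 then 1 else 0

end Puncturing

theorem exists_isHermLCDCode_of_puncture {n m k d c : ℕ} {C : Submodule F4 (Fin n → F4)}
    {S : Finset (Fin n)} (hS : #Sᶜ = m) (hC : IsHermLCDCode n k d C) (hcol : ∀ j, ∃ y ∈ C, y j ≠ 0)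
    (hherm : ∀ y ∈ C, ∀ y' ∈ C, ∑ j ∈ S, y j * y' j ^ 2 = 0)
    (hwt : ∀ y ∈ C, y ≠ 0 → #{j ∈ S | y j ≠ 0} = c) :
    ∃ C₀ : Submodule F4 (Fin m → F4),
      IsHermLCDCode m k (d - c) C₀ ∧ ∀ t, ∃ z ∈ C₀, z t ≠ 0 := by
  obtain ⟨hdim, hlcd, ⟨y₀, hy₀, hy₀0, hy₀wt⟩, hmin⟩ := hC
  have hherm' : ∀ y ∈ C, ∀ y' ∈ C, hermInner (puncture hS y) (puncture hS y') = hermInner y y' :=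
    fun y hy y' hy' => by rw [← hermInner_puncture_add_sum hS, hherm y hy y' hy', add_zero]
  have hwt' : ∀ y ∈ C, y ≠ 0 → wt (puncture hS y) + c = wt y := fun y hy hy0 => by
    rw [← hwt y hy hy0, wt_puncture_add_card]
  have hker : ∀ y ∈ C, puncture hS y = 0 → y = 0 := fun y hy h0 =>
    hlcd y hy fun y' hy' => by
      rw [← hherm' y hy y' hy', h0]
      simp [hermInner]
  have hinj : Function.Injective (puncture hS ∘ₗ C.subtype) := by
    rw [← LinearMap.ker_eq_bot, LinearMap.ker_eq_bot']
    exact fun y hy => Subtype.ext (hker y y.2 hy)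
  refine ⟨LinearMap.range (puncture hS ∘ₗ C.subtype),
    ⟨?_, ?_, ⟨puncture hS y₀, ⟨⟨y₀, hy₀⟩, rfl⟩, ?_, ?_⟩, ?_⟩, fun t => ?_⟩
  · rw [LinearMap.finrank_range_of_inj hinj, hdim]
  · rintro _ ⟨⟨y, hy⟩, rfl⟩ hdual
    have hy0 : y = 0 := hlcd y hy fun y' hy' => by
      rw [← hherm' y hy y' hy']
      exact hdual _ ⟨⟨y', hy'⟩, rfl⟩
    simp [hy0]
  · exact fun h => hy₀0 (hker y₀ hy₀ h)
  · have := hwt' y₀ hy₀ hy₀0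
    omega
  · rintro _ ⟨⟨y, hy⟩, rfl⟩ hy0
    have hy0 : y ≠ 0 := by
      rintro rfl
      exact hy0 (map_zero _)
    have h1 := hwt' y hy hy0
    have h2 := hmin y hy hy0
    simp only [LinearMap.coe_comp, Function.comp_apply, Submodule.coe_subtype] at h1 ⊢
    omega
  · obtain ⟨y, hy, hyt⟩ := hcol (Sᶜ.orderEmbOfFin hS t)
    exact ⟨puncture hS y, ⟨⟨y, hy⟩, rfl⟩, hyt⟩

theorem card_projectivization_dual_mul_three {V : Type*} [AddCommGroup V] [Module F4 V]
    [Fintype V] : Fintype.card (ℙ F4 (Module.Dual F4 V)) * 3 = Fintype.card V - 1 := by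
  have h := Projectivization.card F4 (Module.Dual F4 V)
  simp only [Nat.card_eq_fintype_card, card_F4] at h
  rw [← h, Module.card_eq_pow_finrank (K := F4) (V := Module.Dual F4 V),
    Module.card_eq_pow_finrank (K := F4) (V := V), Subspace.dual_finrank_eq]

theorem exists_isHermLCDCode_remove_simplex_copies {n k α s : ℕ} {C : Submodule F4 (Fin n → F4)}
    (hk : 3 ≤ k) (hC : IsHermLCDCode n k α C) (hcol : ∀ j, ∃ y ∈ C, y j ≠ 0)
    (hs : s + 3 * n ≤ 4 * α) :
    ∃ C₀ : Submodule F4 (Fin (n - s * ((4 ^ k - 1) / 3)) → F4),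
      IsHermLCDCode (n - s * ((4 ^ k - 1) / 3)) k (α - s * 4 ^ (k - 1)) C₀ ∧
        ∀ t, ∃ z ∈ C₀, z t ≠ 0 := by
  have hcardC : Fintype.card C = 4 * 4 ^ (k - 1) := by
    rw [← pow_succ', Nat.sub_add_cancel (by omega), ← hC.1,
      Module.card_eq_pow_finrank (K := F4) (V := C), card_F4]
  have hθ : (4 ^ k - 1) / 3 = Fintype.card (ℙ F4 (Module.Dual F4 C)) := by
    have h := card_projectivization_dual_mul_three (V := C)
    rw [hcardC, ← pow_succ', Nat.sub_add_cancel (by omega)] at h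
    omega
  obtain ⟨D, hD⟩ := exists_finset_card_fiber_eq (coordPoint hcol) (s := s) fun P => by
    have := four_mul_le_three_mul_add_card_coordPoint_eq hcol
      (fun y hy => hC.2.2.2 y y.2 (by simpa using hy)) P
    omega
  have hDc : #Dᶜ = n - s * ((4 ^ k - 1) / 3) := by
    rw [Finset.card_compl, Fintype.card_fin, hθ, card_eq_mul_card_of_card_fiber_eq _ hD]
  refine exists_isHermLCDCode_of_puncture hDc hC hcol
    (fun y hy y' hy' =>
      sum_mul_sq_eq_zero_of_card_fiber_eq hcol hD (by rw [hC.1]; omega) ⟨y, hy⟩ ⟨y', hy'⟩)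
    (fun y hy hy0 => ?_)
  have h := card_filter_apply_ne_zero_mul_four_of_card_fiber_eq hcol hD (y := ⟨y, hy⟩)
    (by simpa using hy0)
  rw [hcardC] at h
  linarith

theorem eq_four_mul_add_and_eq_three_mul_add {n k α r s θ : ℕ} (hk : 1 ≤ k) (hθ : θ * 3 = 4 ^ k - 1)
    (hs : (s : ℤ) = 4 * α - 3 * n) (hr : (r : ℤ) = 4 ^ (k - 1) * n - θ * α) :
    n = 4 * r + s * θ ∧ α = 3 * r + s * 4 ^ (k - 1) := by
  have hpow : (4 : ℤ) ^ k = 4 * 4 ^ (k - 1) := by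
    rw [← pow_succ', Nat.sub_add_cancel hk]
  have h4 : 1 ≤ 4 ^ k := Nat.one_le_pow _ _ (by norm_num)
  zify [h4] at hθ
  constructor
  · zify
    linear_combination (-4) * hr - θ * hs + n * hθ + n * hpow
  · zify
    linear_combination (-3) * hr - 4 ^ (k - 1) * hs + α * hθ + α * hpow

theorem stmt8_general (n k α r : ℕ) (hk : 3 ≤ k)
    (h1 : 1 ≤ 4 * (α : ℤ) - 3 * (n : ℤ))
    (hr : (r : ℤ) = 4 ^ (k - 1) * (n : ℤ) - (((4 ^ k - 1) / 3 : ℕ) : ℤ) * (α : ℤ))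
    (h0 : ¬ ∃ C₀ : Submodule F4 (Fin (4 * r) → F4),
      IsHermLCDCode (4 * r) k (3 * r) C₀ ∧ ∀ x, inHermDual C₀ x → wt x ≠ 1) :
    ¬ ∃ C : Submodule F4 (Fin n → F4),
      IsHermLCDCode n k α C ∧ ∀ x, inHermDual C x → wt x ≠ 1 := by
  rintro ⟨C, hC, hdual⟩
  rw [forall_inHermDual_wt_ne_one_iff] at hdual
  obtain ⟨s, hs⟩ : ∃ s : ℕ, (s : ℤ) = 4 * α - 3 * n := ⟨_, Int.toNat_of_nonneg (by omega)⟩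
  have hθ : (4 ^ k - 1) / 3 * 3 = 4 ^ k - 1 :=
    Nat.div_mul_cancel (by simpa using Nat.sub_dvd_pow_sub_pow 4 1 k)
  obtain ⟨hn, hα⟩ := eq_four_mul_add_and_eq_three_mul_add (by omega) hθ hs hr
  have hC₀ := exists_isHermLCDCode_remove_simplex_copies hk hC hdual (s := s) (by omega)
  rw [show n - s * ((4 ^ k - 1) / 3) = 4 * r by omega,
    show α - s * 4 ^ (k - 1) = 3 * r by omega] at hC₀
  obtain ⟨C₀, hC₀, hcol₀⟩ := hC₀
  exact h0 ⟨C₀, hC₀, forall_inHermDual_wt_ne_one_iff.2 hcol₀⟩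

/-- if `4·r₄(n,k,α) ≥ k`, `k ≥ 3`, `4α - 3n ≥ 1`, and there is no quaternary
Hermitian LCD `[4r, k, 3r]` code (with `r = r₄(n,k,α)`) whose Hermitian dual has no
weight-1 vector, then there is no quaternary Hermitian LCD `[n,k,α]` code whose Hermitian
dual has no weight-1 vector. -/
theorem stmt8 (n k α r : ℕ) (hn : 1 ≤ n) (hk : 3 ≤ k) (hα : 1 ≤ α)
    (h1 : 1 ≤ 4 * (α : ℤ) - 3 * (n : ℤ))
    (hr : (r : ℤ) = 4 ^ (k - 1) * (n : ℤ) - (((4 ^ k - 1) / 3 : ℕ) : ℤ) * (α : ℤ))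
    (h2 : k ≤ 4 * r)
    (h0 : ¬ ∃ C₀ : Submodule F4 (Fin (4 * r) → F4),
      IsHermLCDCode (4 * r) k (3 * r) C₀ ∧ ∀ x, inHermDual C₀ x → wt x ≠ 1) :
    ¬ ∃ C : Submodule F4 (Fin n → F4),
      IsHermLCDCode n k α C ∧ ∀ x, inHermDual C x → wt x ≠ 1 :=
  stmt8_general n k α r hk h1 hr h0
end
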